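/- Let A be a ⊖-algebra and let X be the set of prime ideals of A, partially ordered by inclusion and topologized by the topology generated by the sets {x ∈ X | a ∈ x} and {x ∈ X | a ∉ x} for a ∈ A. Then the set dom(+) = {(x,y) ∈ X × X | y ⊆ i(x)} is a closed lower set of X × X (with the product topology and the componentwise inclusion order), and the set dom(⋆) = {(x,y) ∈ X × X | i(x) ⊈ y} is an open lower set of X × X. -/
import Mathlib


class OminusAlgebra (A : Type*) extends DistribLattice A, BoundedOrder A where
  ominus : A → A → A
  inf_ominus : ∀ a b c : A, ominus (a ⊓ b) c = ominus a c ⊓ ominus b c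
  sup_ominus : ∀ a b c : A, ominus (a ⊔ b) c = ominus a c ⊔ ominus b c
  ominus_inf : ∀ a b c : A, ominus a (b ⊓ c) = ominus a b ⊔ ominus a c
  ominus_sup : ∀ a b c : A, ominus a (b ⊔ c) = ominus a b ⊓ ominus a c
  bot_ominus : ∀ a : A, ominus ⊥ a = ⊥
  ominus_top : ∀ a : A, ominus a ⊤ = ⊥
  ominus_bot : ∀ a : A, ominus a ⊥ = a

infixl:65 " ⊖ " => OminusAlgebra.ominus

variable {A : Type*} [OminusAlgebra A]

def oneg (a : A) : A := ⊤ ⊖ a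

def oplus (a b : A) : A := oneg (oneg a ⊖ b)

def IsPrimeIdeal (x : Set A) : Prop :=
  x.Nonempty ∧ (∀ a b : A, a ≤ b → b ∈ x → a ∈ x) ∧
    (∀ a b : A, a ∈ x → b ∈ x → a ⊔ b ∈ x) ∧ x ≠ Set.univ ∧
    (∀ a b : A, a ⊓ b ∈ x → a ∈ x ∨ b ∈ x)

def ineg (x : Set A) : Set A := {a | oneg a ∉ x}

def domPlus (x y : Set A) : Prop := y ⊆ ineg x

def pplus (x y : Set A) : Set A := {a | ∃ b ∈ y, a ⊖ b ∈ x}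

def domStar (x y : Set A) : Prop := ¬ ineg x ⊆ y

def pstar (x y : Set A) : Set A := {a | ∀ b ∉ y, a ⊖ b ∈ x}

/-- The Priestley topology on the set of prime ideals of `A`, generated by the sets
`{x | a ∈ x}` and `{x | a ∉ x}` for `a ∈ A`. -/
def priTop (A : Type*) [OminusAlgebra A] :
    TopologicalSpace {x : Set A // IsPrimeIdeal x} :=
  TopologicalSpace.generateFrom
    ({U | ∃ a : A, U = {x : {x : Set A // IsPrimeIdeal x} | a ∈ x.1}} ∪
     {U | ∃ a : A, U = {x : {x : Set A // IsPrimeIdeal x} | a ∉ x.1}})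

theorem stmt16 {A : Type*} [OminusAlgebra A] :
    @IsClosed ({x : Set A // IsPrimeIdeal x} × {x : Set A // IsPrimeIdeal x})
      (@instTopologicalSpaceProd _ _ (priTop A) (priTop A))
      {q | domPlus q.1.1 q.2.1} ∧
    IsLowerSet {q : {x : Set A // IsPrimeIdeal x} × {x : Set A // IsPrimeIdeal x} |
      domPlus q.1.1 q.2.1} ∧
    @IsOpen ({x : Set A // IsPrimeIdeal x} × {x : Set A // IsPrimeIdeal x})
      (@instTopologicalSpaceProd _ _ (priTop A) (priTop A))
      {q | domStar q.1.1 q.2.1} ∧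
    IsLowerSet {q : {x : Set A // IsPrimeIdeal x} × {x : Set A // IsPrimeIdeal x} |
      domStar q.1.1 q.2.1} := by
  letI : TopologicalSpace {x : Set A // IsPrimeIdeal x} := priTop A
  have hmem : ∀ a : A, IsOpen {x : {x : Set A // IsPrimeIdeal x} | a ∈ x.1} := fun a =>
    TopologicalSpace.isOpen_generateFrom_of_mem (Or.inl ⟨a, rfl⟩)
  have hnmem : ∀ a : A, IsOpen {x : {x : Set A // IsPrimeIdeal x} | a ∉ x.1} := fun a =>
    TopologicalSpace.isOpen_generateFrom_of_mem (Or.inr ⟨a, rfl⟩)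
  refine ⟨?_, ?_, ?_, ?_⟩
  · rw [← isOpen_compl_iff]
    have h1 : {q : {x : Set A // IsPrimeIdeal x} × {x : Set A // IsPrimeIdeal x} |
        domPlus q.1.1 q.2.1}ᶜ =
        ⋃ a : A, ({x : {x : Set A // IsPrimeIdeal x} | oneg a ∈ x.1} ×ˢ
          {x : {x : Set A // IsPrimeIdeal x} | a ∈ x.1}) := by
      ext q
      simp only [Set.mem_compl_iff, Set.mem_setOf_eq, domPlus, Set.not_subset, ineg,
        Set.mem_iUnion, Set.mem_prod, not_not]
      tauto
    rw [h1]
    exact isOpen_iUnion fun a => (hmem _).prod (hmem a)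
  · intro q q' hle h a ha
    exact fun h2 => (h (hle.2 ha)) (hle.1 h2)
  · have h1 : {q : {x : Set A // IsPrimeIdeal x} × {x : Set A // IsPrimeIdeal x} |
        domStar q.1.1 q.2.1} =
        ⋃ a : A, ({x : {x : Set A // IsPrimeIdeal x} | oneg a ∉ x.1} ×ˢ
          {x : {x : Set A // IsPrimeIdeal x} | a ∉ x.1}) := by
      ext q
      simp only [Set.mem_setOf_eq, domStar, Set.not_subset, ineg, Set.mem_iUnion, Set.mem_prod]

    rw [h1]
    exact isOpen_iUnion fun a => (hnmem _).prod (hnmem a)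
  · intro q q' hle h hsub
    exact h fun a ha => hle.2 (hsub fun h2 => ha (hle.1 h2))
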